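/- For s ≥ 1, the numbers p(2n, s, j) of Dyck paths of length 2n with exactly j points at height s satisfy the recursion p(2n, s, j) = Σ_{i=0}^{n-1} Σ_{k=0}^{j} p(2i, s-1, k) · p(2(n-i-1), s, j-k). -/

import Mathlib

/-!
Every nonempty Dyck path factors uniquely as `U a D b`, where `U a D` is the part up to its first
return to the axis and `a`, `b` are Dyck paths. For `s ≥ 1` the points of `U a D b` at height `s`
are those of the raised copy of `a` (at height `s - 1` in `a`) and those of `b`. Hence the paths
of length `2n` with `j` points at height `s` correspond bijectively to the pairs `(a, b)` with
`|a| = 2i`, `|b| = 2(n - i - 1)`, `k` points of `a` at height `s - 1` and `j - k` points of `b`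
at height `s`.
-/

/-- A step of a Dyck path: `true` = up step (1,1), `false` = down step (1,-1). -/
def dstep (b : Bool) : ℤ := if b then 1 else -1

/-- Height of the path after its first `k` steps. -/
def dheight (p : List Bool) (k : ℕ) : ℤ := ((p.take k).map dstep).sum

/-- A Dyck path: ends at height 0 and never goes below the x-axis. -/
def IsDyck (p : List Bool) : Prop :=
  (p.map dstep).sum = 0 ∧ ∀ k, 0 ≤ dheight p k

/-- Number of lattice points of the path at level `l` (its "feet" at level `l`). -/
def feet (p : List Bool) (l : ℤ) : ℕ :=
  ((List.range (p.length + 1)).map (dheight p)).count l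

/-- The frame of a Dyck path: at position `k`, the number of its points at height `k`. -/
def frame (p : List Bool) : ℕ → ℕ := fun k => feet p (k : ℤ)

/-- `DyckFeet m l j` = number of Dyck paths of length `m` with exactly `j` points at level `l`. -/
noncomputable def DyckFeet (m : ℕ) (l : ℤ) (j : ℕ) : ℕ :=
  Set.ncard {p : List Bool | p.length = m ∧ IsDyck p ∧ feet p l = j}

/-- A sequence is admissible if it is the frame of some Dyck path. -/
def Admissible (I : ℕ → ℕ) : Prop := ∃ p : List Bool, IsDyck p ∧ frame p = I

open Function

@[simp]
lemma dstep_true : dstep true = 1 := rfl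

@[simp]
lemma dstep_false : dstep false = -1 := rfl

@[simp]
lemma dheight_zero (p : List Bool) : dheight p 0 = 0 := rfl

lemma dheight_cons_succ (x : Bool) (p : List Bool) (k : ℕ) :
    dheight (x :: p) (k + 1) = dstep x + dheight p k := by
  simp [dheight, List.take_succ_cons]

lemma dheight_append (a b : List Bool) (k : ℕ) :
    dheight (a ++ b) k = dheight a k + dheight b (k - a.length) := by
  rw [dheight, List.take_append, List.map_append, List.sum_append]; rfl

lemma dheight_of_length_le {p : List Bool} {k : ℕ} (h : p.length ≤ k) :
    dheight p k = (p.map dstep).sum := by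
  rw [dheight, List.take_of_length_le h]

lemma sum_dstep_add_length (p : List Bool) :
    (p.map dstep).sum + p.length = 2 * p.count true := by
  induction p with
  | nil => simp
  | cons x p ih => cases x <;> simp <;> linarith

lemma IsDyck.even_length {p : List Bool} (hp : IsDyck p) : Even p.length := by
  have h := sum_dstep_add_length p
  rw [hp.1, zero_add] at h
  exact ⟨p.count true, by omega⟩

def heights (p : List Bool) : List ℤ := (List.range (p.length + 1)).map (dheight p)

lemma heights_nil : heights [] = [0] := rfl

lemma heights_cons (x : Bool) (p : List Bool) :
    heights (x :: p) = 0 :: (heights p).map (dstep x + ·) := by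
  rw [heights, List.length_cons, List.range_succ_eq_map, List.map_cons, List.map_map, heights,
    List.map_map]
  congr 1

lemma heights_append_cons (a b : List Bool) (x : Bool) :
    heights (a ++ x :: b) = heights a ++ (heights b).map ((a.map dstep).sum + dstep x + ·) := by
  induction a with
  | nil => simp [heights_cons, heights_nil]
  | cons y a ih =>
    simp only [List.cons_append, heights_cons, ih, List.map_append, List.map_map, List.map_cons,
      List.sum_cons, comp_def, add_assoc]

lemma feet_eq_count_heights (p : List Bool) (l : ℤ) : feet p l = (heights p).count l := rfl

/-- The first-return decomposition `U a D b` of a nonempty Dyck path. -/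
def liftAppend (a b : List Bool) : List Bool := true :: a ++ false :: b

lemma heights_liftAppend {a : List Bool} (ha : (a.map dstep).sum = 0) (b : List Bool) :
    heights (liftAppend a b) = 0 :: (heights a).map (1 + ·) ++ heights b := by
  simp [liftAppend, heights_cons, heights_append_cons, ha, comp_def]

lemma feet_liftAppend {a : List Bool} (ha : (a.map dstep).sum = 0) (b : List Bool) {l : ℤ}
    (hl : 1 ≤ l) : feet (liftAppend a b) l = feet a (l - 1) + feet b l := by
  have h := List.count_map_of_injective (heights a) _ (add_right_injective (1 : ℤ)) (l - 1)
  rw [add_sub_cancel] at h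
  rw [feet_eq_count_heights, heights_liftAppend ha, List.cons_append,
    List.count_cons_of_ne (by omega), List.count_append, h]
  rfl

lemma isDyck_liftAppend {a b : List Bool} (ha : IsDyck a) (hb : IsDyck b) :
    IsDyck (liftAppend a b) := by
  refine ⟨by simp [liftAppend, ha.1, hb.1], ?_⟩
  rintro (_ | k)
  · exact le_rfl
  rw [liftAppend, List.cons_append, dheight_cons_succ, dheight_append]
  rcases le_or_gt k a.length with hk | hk
  · rw [Nat.sub_eq_zero_of_le hk]
    have := ha.2 k
    simp only [dstep_true, dheight_zero, add_zero]
    omega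
  · rw [dheight_of_length_le hk.le, ha.1, show k - a.length = k - a.length - 1 + 1 by omega,
      dheight_cons_succ]
    have := hb.2 (k - a.length - 1)
    simp only [dstep_true, dstep_false, zero_add]
    omega

/-- `a` is the part of `q` before its first step below level `-c`. -/
lemma exists_eq_append_false_cons_of_dheight_lt (q : List Bool) {c : ℤ} (hc : 0 ≤ c)
    (h : ∃ k, c + dheight q k < 0) :
    ∃ a b, q = a ++ false :: b ∧ (∀ k, 0 ≤ c + dheight a k) ∧ c + (a.map dstep).sum = 0 := by
  induction q generalizing c with
  | nil => simp [dheight] at h; omega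
  | cons x q ih =>
    obtain ⟨_ | k, hk⟩ := h
    · exact absurd hk (by simpa [dheight] using hc)
    rw [dheight_cons_succ, ← add_assoc] at hk
    by_cases hx : c + dstep x < 0
    · have : x = false ∧ c = 0 := by cases x <;> simp at hx ⊢ <;> omega
      obtain ⟨rfl, rfl⟩ := this
      exact ⟨[], q, rfl, fun k => by simp [dheight], by simp⟩
    obtain ⟨a, b, rfl, ha, hsum⟩ := ih (not_lt.mp hx) ⟨k, hk⟩
    refine ⟨x :: a, b, rfl, ?_, by simpa [add_assoc] using hsum⟩
    rintro (_ | k)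
    · simpa [dheight] using hc
    · simpa [dheight_cons_succ, add_assoc] using ha k

lemma IsDyck.exists_eq_liftAppend {p : List Bool} (hp : IsDyck p) (hne : p ≠ []) :
    ∃ a b, IsDyck a ∧ IsDyck b ∧ p = liftAppend a b := by
  obtain ⟨x, q, rfl⟩ := List.exists_cons_of_ne_nil hne
  have hx : x = true := by
    have := hp.2 1
    cases x <;> simp_all [dstep, dheight]
  subst hx
  have hq : dheight q q.length = -1 := by
    have := dheight_cons_succ true q q.length
    rw [dheight_of_length_le (by simp), hp.1, dheight_of_length_le le_rfl] at this
    rw [dheight_of_length_le le_rfl]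
    rw [dstep_true] at this
    omega
  obtain ⟨a, b, rfl, ha, hsum⟩ :=
    exists_eq_append_false_cons_of_dheight_lt q le_rfl ⟨q.length, by omega⟩
  simp only [zero_add] at ha hsum
  change IsDyck (liftAppend a b) at hp
  have hb : ∀ m, dheight (liftAppend a b) (a.length + 2 + m) = dheight b m := by
    intro m
    rw [liftAppend, List.cons_append, show a.length + 2 + m = a.length + 1 + m + 1 by omega,
      dheight_cons_succ, dheight_append, dheight_of_length_le (by omega), hsum,
      show a.length + 1 + m - a.length = m + 1 by omega, dheight_cons_succ]
    simp
  refine ⟨a, b, ⟨hsum, ha⟩, ⟨?_, fun m => hb m ▸ hp.2 _⟩, rfl⟩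
  have := hb b.length
  rw [dheight_of_length_le le_rfl, dheight_of_length_le (by simp only [liftAppend, List.cons_append, List.length_cons, List.length_append]; omega),
    hp.1] at this
  exact this.symm

lemma IsDyck.length_le_of_append_false_cons_eq {a b a' b' : List Bool} (ha : IsDyck a)
    (ha' : IsDyck a') (h : a ++ false :: b = a' ++ false :: b') : a'.length ≤ a.length := by
  by_contra! hlt
  have key := congrArg (dheight · (a.length + 1)) h
  simp only [dheight_append, Nat.sub_eq_zero_of_le hlt, dheight_of_length_le (Nat.le_succ _),
    ha.1, show a.length + 1 - a.length = 0 + 1 by omega, dheight_cons_succ] at key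
  have := ha'.2 (a.length + 1)
  simp only [dstep_false, dheight_zero, add_zero, zero_add] at key
  omega

lemma liftAppend_injOn : Set.InjOn (uncurry liftAppend) {ab | IsDyck ab.1} := by
  rintro ⟨a, b⟩ ha ⟨a', b'⟩ ha' h
  have h' : a ++ false :: b = a' ++ false :: b' := by simpa [liftAppend] using h
  have hlen := le_antisymm (ha'.length_le_of_append_false_cons_eq ha h'.symm)
    (ha.length_le_of_append_false_cons_eq ha' h')
  obtain ⟨rfl, hb⟩ := List.append_inj h' hlen
  simp_all

def dyckFeetSet (m : ℕ) (l : ℤ) (j : ℕ) : Set (List Bool) :=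
  {p | p.length = m ∧ IsDyck p ∧ feet p l = j}

lemma dyckFeet_eq_ncard (m : ℕ) (l : ℤ) (j : ℕ) : DyckFeet m l j = (dyckFeetSet m l j).ncard :=
  rfl

lemma dyckFeetSet_finite (m : ℕ) (l : ℤ) (j : ℕ) : (dyckFeetSet m l j).Finite :=
  (List.finite_length_eq Bool m).subset fun _ hp => hp.1

/-- For `q = (i, k)`: the paths `U a D b` with `a.length = 2 * i`, `b.length = 2 * (n - i - 1)`,
`feet a (l - 1) = k` and `feet b l = j - k`. -/
def firstReturnBlock (n : ℕ) (l : ℤ) (j : ℕ) (q : ℕ × ℕ) : Set (List Bool) :=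
  uncurry liftAppend ''
    (dyckFeetSet (2 * q.1) (l - 1) q.2 ×ˢ dyckFeetSet (2 * (n - q.1 - 1)) l (j - q.2))

section firstReturnBlock

variable (n : ℕ) (l : ℤ) (j : ℕ)

lemma firstReturnBlock_finite (q : ℕ × ℕ) : (firstReturnBlock n l j q).Finite :=
  ((dyckFeetSet_finite _ _ _).prod (dyckFeetSet_finite _ _ _)).image _

lemma ncard_firstReturnBlock (q : ℕ × ℕ) :
    (firstReturnBlock n l j q).ncard =
      DyckFeet (2 * q.1) (l - 1) q.2 * DyckFeet (2 * (n - q.1 - 1)) l (j - q.2) := by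
  rw [firstReturnBlock, (liftAppend_injOn.mono fun _ h => h.1.2.1).ncard_image,
    Set.ncard_prod, dyckFeet_eq_ncard, dyckFeet_eq_ncard]

lemma pairwise_disjoint_firstReturnBlock : Pairwise (Disjoint on firstReturnBlock n l j) := by
  intro q q' hne
  refine Set.disjoint_left.mpr ?_
  rintro _ ⟨⟨a, b⟩, ⟨⟨ha, hDa, hfa⟩, -⟩, rfl⟩ ⟨⟨a', b'⟩, ⟨⟨ha', hDa', hfa'⟩, -⟩, h⟩
  obtain ⟨rfl, -⟩ := Prod.ext_iff.mp (liftAppend_injOn hDa' hDa h)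
  dsimp only at ha ha' hfa hfa'
  exact hne (Prod.ext (by omega) (hfa.symm.trans hfa'))

lemma dyckFeetSet_eq_biUnion_firstReturnBlock (hl : 1 ≤ l) (hn : 1 ≤ n) :
    dyckFeetSet (2 * n) l j =
      ⋃ q ∈ ((Finset.range n ×ˢ Finset.range (j + 1) : Finset (ℕ × ℕ)) : Set (ℕ × ℕ)),
        firstReturnBlock n l j q := by
  ext p
  simp only [Set.mem_iUnion, Finset.coe_product, Set.mem_prod, Finset.coe_range, Set.mem_Iio,
    firstReturnBlock, Set.mem_image, Prod.exists, uncurry_apply_pair, dyckFeetSet,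
    Set.mem_ofPred_eq, exists_prop]
  constructor
  · rintro ⟨hlen, hp, rfl⟩
    obtain ⟨a, b, ha, hb, rfl⟩ := hp.exists_eq_liftAppend (List.ne_nil_of_length_pos (by omega))
    obtain ⟨i, hi⟩ := ha.even_length
    simp only [liftAppend, List.length_cons, List.length_append] at hlen
    refine ⟨i, feet a (l - 1), ⟨by omega, ?_⟩, a, b, ⟨⟨by omega, ha, rfl⟩, by omega, hb, ?_⟩, rfl⟩ <;>
      rw [feet_liftAppend ha.1 b hl] <;> omega
  · rintro ⟨i, k, ⟨hi, hk⟩, a, b, ⟨⟨ha, hDa, rfl⟩, hb, hDb, hfb⟩, rfl⟩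
    refine ⟨?_, isDyck_liftAppend hDa hDb, ?_⟩
    · simp only [liftAppend, List.length_cons, List.length_append]
      omega
    · rw [feet_liftAppend hDa.1 b hl]
      omega

end firstReturnBlock

/-- Recursion for the number of Dyck paths of length 2n with exactly j points at height s ≥ 1. -/
theorem stmt5 (n s j : ℕ) (hs : 1 ≤ s) (hn : 1 ≤ n) :
    DyckFeet (2 * n) (s : ℤ) j =
      ∑ i ∈ Finset.range n, ∑ k ∈ Finset.range (j + 1),
        DyckFeet (2 * i) ((s : ℤ) - 1) k * DyckFeet (2 * (n - i - 1)) (s : ℤ) (j - k) := by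
  rw [dyckFeet_eq_ncard, dyckFeetSet_eq_biUnion_firstReturnBlock n s j (by exact_mod_cast hs) hn,
    Set.Finite.ncard_biUnion (Finset.finite_toSet _) (fun q _ => firstReturnBlock_finite n s j q)
      ((pairwise_disjoint_firstReturnBlock n s j).set_pairwise _),
    finsum_mem_coe_finset, Finset.sum_product]
  simp only [ncard_firstReturnBlock]
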